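/- arXiv:2004.07152 — 2 statements merged into one kernel-verified Lean document; each statement's English description precedes it below -/
import Mathlib

section
/- Let \Omega \subset \mathbb{C}^N be open and convex, and let \rho: \Omega \to \mathbb{R} be a C^2 function whose real Hessian satisfies Hess\,\rho(x)(h,h) \ge 2c|h|^2 for all x \in \Omega and h \in \mathbb{R}^{2N}, for some constant c > 0. Define v(\zeta,z) = -\rho(\zeta) - \sum_{j=1}^N \frac{\partial\rho}{\partial\zeta_j}(\zeta)(z_j - \zeta_j). Then for all \zeta, z \in \Omega: 2\,\mathrm{Re}\, v(\zeta,z) \ge -\rho(z) - \rho(\zeta) + c\,|\zeta - z|^2. -/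
/-!
Along the segment `t ↦ ζ + t (z - ζ)` the second derivative of `ρ` is at least
`2c‖z - ζ‖²`, so integrating twice gives `ρ z ≥ ρ ζ + Dρ(ζ)(z - ζ) + c‖z - ζ‖²`.
Since `ρ` is real-valued, `Re ∑ⱼ ∂ρ/∂ζⱼ(ζ)(zⱼ - ζⱼ) = ½ Dρ(ζ)(z - ζ)`, and the claim is this
inequality rearranged.
-/

open Complex

noncomputable section

/-- The holomorphic Wirtinger derivative `∂ρ/∂ζ_j = ½(∂ρ/∂x_j - i ∂ρ/∂y_j)` of a real-valued
function on `ℂ^N`, expressed via the real Fréchet derivative. -/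
def wirtinger {N : ℕ} (ρ : EuclideanSpace ℂ (Fin N) → ℝ) (j : Fin N)
    (ζ : EuclideanSpace ℂ (Fin N)) : ℂ :=
  (1 / 2 : ℂ) * ((fderiv ℝ ρ ζ (EuclideanSpace.single j 1) : ℂ)
    - Complex.I * (fderiv ℝ ρ ζ (EuclideanSpace.single j Complex.I) : ℂ))

open Set

theorem sub_le_sub_of_hasDerivAt_le {f g f' g' : ℝ → ℝ} {a b : ℝ} (hab : a ≤ b)
    (hf : ∀ t ∈ Icc a b, HasDerivAt f (f' t) t) (hg : ∀ t ∈ Icc a b, HasDerivAt g (g' t) t)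
    (hle : ∀ t ∈ Ioo a b, f' t ≤ g' t) : f b - f a ≤ g b - g a := by
  have hderiv : ∀ t ∈ Icc a b, HasDerivAt (g - f) (g' t - f' t) t :=
    fun t ht => (hg t ht).sub (hf t ht)
  have hmono : MonotoneOn (g - f) (Icc a b) := by
    refine monotoneOn_of_hasDerivWithinAt_nonneg (f' := g' - f') (convex_Icc a b)
      (fun t ht => (hderiv t ht).continuousAt.continuousWithinAt) (fun t ht => ?_) (fun t ht => ?_)
    · rw [interior_Icc] at ht
      exact (hderiv t (Ioo_subset_Icc_self ht)).hasDerivWithinAt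
    · rw [interior_Icc] at ht
      exact sub_nonneg.2 (hle t ht)
  have := hmono (left_mem_Icc.2 hab) (right_mem_Icc.2 hab) hab
  simp only [Pi.sub_apply] at this
  linarith

theorem add_add_le_of_two_mul_le_deriv2 {φ φ' φ'' : ℝ → ℝ} {a : ℝ}
    (hφ : ∀ t ∈ Icc (0 : ℝ) 1, HasDerivAt φ (φ' t) t)
    (hφ' : ∀ t ∈ Icc (0 : ℝ) 1, HasDerivAt φ' (φ'' t) t)
    (hφ'' : ∀ t ∈ Icc (0 : ℝ) 1, 2 * a ≤ φ'' t) :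
    φ 0 + φ' 0 + a ≤ φ 1 := by
  have hslope : ∀ t ∈ Icc (0 : ℝ) 1, φ' 0 + 2 * a * t ≤ φ' t := by
    intro t ht
    have hsub : Icc 0 t ⊆ Icc (0 : ℝ) 1 := Icc_subset_Icc_right ht.2
    have := sub_le_sub_of_hasDerivAt_le (f := fun s => 2 * a * s) ht.1
      (fun s _ => (hasDerivAt_id s).const_mul (2 * a)) (fun s hs => hφ' s (hsub hs))
      (fun s hs => by simpa using hφ'' s (hsub (Ioo_subset_Icc_self hs)))
    linarith
  have hquad : ∀ t : ℝ, HasDerivAt (fun s => φ' 0 * s + a * s ^ 2) (φ' 0 + 2 * a * t) t := by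
    intro t
    refine (((hasDerivAt_id' t).const_mul (φ' 0)).add
      ((hasDerivAt_pow 2 t).const_mul a)).congr_deriv ?_
    push_cast
    ring
  have := sub_le_sub_of_hasDerivAt_le zero_le_one (fun t _ => hquad t) hφ
    (fun t ht => hslope t (Ioo_subset_Icc_self ht))
  linarith

theorem Convex.add_fderiv_add_mul_norm_sq_le {E : Type*} [NormedAddCommGroup E] [NormedSpace ℝ E]
    {Ω : Set E} (hΩo : IsOpen Ω) (hΩc : Convex ℝ Ω) {ρ : E → ℝ} {c : ℝ}
    (hρ : ContDiffOn ℝ 2 ρ Ω)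
    (hHess : ∀ x ∈ Ω, ∀ h : E, 2 * c * ‖h‖ ^ 2 ≤ fderiv ℝ (fderiv ℝ ρ) x h h)
    {x y : E} (hx : x ∈ Ω) (hy : y ∈ Ω) :
    ρ x + fderiv ℝ ρ x (y - x) + c * ‖y - x‖ ^ 2 ≤ ρ y := by
  set h := y - x
  set γ : ℝ → E := fun t => x + t • h
  have hγΩ : ∀ t ∈ Icc (0 : ℝ) 1, γ t ∈ Ω := fun t ht => by
    simpa [γ, h] using hΩc.add_smul_sub_mem hx hy ht
  have hγ : ∀ t, HasDerivAt γ h t := fun t => by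
    simpa [γ] using ((hasDerivAt_id t).smul_const h).const_add x
  have hργ : ∀ t ∈ Icc (0 : ℝ) 1, ContDiffAt ℝ 2 ρ (γ t) := fun t ht =>
    hρ.contDiffAt (hΩo.mem_nhds (hγΩ t ht))
  have := add_add_le_of_two_mul_le_deriv2 (φ := fun t => ρ (γ t))
    (φ' := fun t => fderiv ℝ ρ (γ t) h) (φ'' := fun t => fderiv ℝ (fderiv ℝ ρ) (γ t) h h)
    (a := c * ‖h‖ ^ 2)
    (fun t ht => ((hργ t ht).differentiableAt two_ne_zero).hasFDerivAt.comp_hasDerivAt t (hγ t))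
    (fun t ht => by
      have hD := ((hργ t ht).fderiv_right le_rfl).differentiableAt one_ne_zero
      simpa using (hD.hasFDerivAt.comp_hasDerivAt t (hγ t)).clm_apply (hasDerivAt_const t h))
    (fun t ht => by simpa [mul_assoc] using hHess (γ t) (hγΩ t ht) h)
  simpa [γ, h] using this

theorem ContinuousLinearMap.map_complex_smul {E : Type*} [NormedAddCommGroup E]
    [NormedSpace ℂ E] (L : E →L[ℝ] ℝ) (w : ℂ) (v : E) :
    L (w • v) = w.re * L v + w.im * L (I • v) := by
  conv_lhs => rw [← Complex.re_add_im w]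
  rw [add_smul, mul_smul, Complex.coe_smul, Complex.coe_smul, map_add, map_smul, map_smul,
    smul_eq_mul, smul_eq_mul]

theorem re_sum_wirtinger_mul {N : ℕ} (ρ : EuclideanSpace ℂ (Fin N) → ℝ)
    (ζ h : EuclideanSpace ℂ (Fin N)) :
    (∑ j, wirtinger ρ j ζ * h j).re = fderiv ℝ ρ ζ h / 2 := by
  set D := fderiv ℝ ρ ζ
  have hD : D h = ∑ j, ((h j).re * D (EuclideanSpace.single j 1)
      + (h j).im * D (EuclideanSpace.single j I)) := by
    conv_lhs => rw [← (EuclideanSpace.basisFun (Fin N) ℂ).sum_repr h]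
    rw [map_sum]
    refine Finset.sum_congr rfl fun j _ => ?_
    rw [D.map_complex_smul, EuclideanSpace.basisFun_apply, EuclideanSpace.basisFun_repr]
    congr 3
    ext k
    simp
  rw [Complex.re_sum, hD, Finset.sum_div]
  refine Finset.sum_congr rfl fun j _ => ?_
  simp only [wirtinger, D, one_div, mul_re, inv_re, re_ofNat, normSq_ofNat, sub_re, ofReal_re,
    I_re, I_im, ofReal_im, sub_im, mul_im, inv_im, im_ofNat]
  ring

theorem stmt2_general (N : ℕ) (Ω : Set (EuclideanSpace ℂ (Fin N))) (hΩo : IsOpen Ω)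
    (hΩc : Convex ℝ Ω) (ρ : EuclideanSpace ℂ (Fin N) → ℝ) (c : ℝ)
    (hρ : ContDiffOn ℝ 2 ρ Ω)
    (hHess : ∀ x ∈ Ω, ∀ h : EuclideanSpace ℂ (Fin N),
      fderiv ℝ (fun y => fderiv ℝ ρ y) x h h ≥ 2 * c * ‖h‖ ^ 2)
    (ζ z : EuclideanSpace ℂ (Fin N)) (hζ : ζ ∈ Ω) (hz : z ∈ Ω) :
    2 * (-(ρ ζ : ℂ) - ∑ j, wirtinger ρ j ζ * (z j - ζ j)).re
      ≥ -ρ z - ρ ζ + c * ‖ζ - z‖ ^ 2 := by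
  have hconv := hΩc.add_fderiv_add_mul_norm_sq_le hΩo hρ hHess hζ hz
  have hre : (-(ρ ζ : ℂ) - ∑ j, wirtinger ρ j ζ * (z j - ζ j)).re
      = -ρ ζ - fderiv ℝ ρ ζ (z - ζ) / 2 := by
    rw [Complex.sub_re, ← re_sum_wirtinger_mul]
    simp
  rw [hre, norm_sub_rev]
  linarith

/-- If `ρ` is `C²` on a convex open set `Ω ⊂ ℂ^N` with real Hessian `≥ 2c·Id`, and
`v(ζ,z) = -ρ(ζ) - ∑_j ∂ρ/∂ζ_j(ζ)(z_j - ζ_j)`, then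
`2 Re v(ζ,z) ≥ -ρ(z) - ρ(ζ) + c|ζ - z|²` for all `ζ, z ∈ Ω`. -/
theorem stmt2 (N : ℕ) (Ω : Set (EuclideanSpace ℂ (Fin N))) (hΩo : IsOpen Ω)
    (hΩc : Convex ℝ Ω) (ρ : EuclideanSpace ℂ (Fin N) → ℝ) (c : ℝ) (hc : 0 < c)
    (hρ : ContDiffOn ℝ 2 ρ Ω)
    (hHess : ∀ x ∈ Ω, ∀ h : EuclideanSpace ℂ (Fin N),
      fderiv ℝ (fun y => fderiv ℝ ρ y) x h h ≥ 2 * c * ‖h‖ ^ 2)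
    (ζ z : EuclideanSpace ℂ (Fin N)) (hζ : ζ ∈ Ω) (hz : z ∈ Ω) :
    2 * (-(ρ ζ : ℂ) - ∑ j, wirtinger ρ j ζ * (z j - ζ j)).re
      ≥ -ρ z - ρ ζ + c * ‖ζ - z‖ ^ 2 :=
  stmt2_general N Ω hΩo hΩc ρ c hρ hHess ζ z hζ hz

end
end

section
/- Let N \ge 1 be an integer, s > -1 and b > 0 real numbers. There is a constant C = C(N,s,b) such that for all y = (y_1,\ldots,y_{2N}) \in \mathbb{R}^{2N} with y_1 > 0: \int_{\{x \in \mathbb{R}^{2N}:\ |x| < 1,\ x_1 > 0\}} \frac{x_1^s \; dx_1\cdots dx_{2N}}{\big(x_1 + y_1 + |x_2 - y_2| + \sum_{j=3}^{2N}(x_j - y_j)^2\big)^{N+1+s+b}} \;\le\; \frac{C}{y_1^{\,b}}. -/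
/-!
Write the denominator as `D = y₁ + ∑ⱼ |xⱼ - cⱼ| ^ pⱼ` with `p = (1, 1, 2, …, 2)`, `c₁ = 0` and
`cⱼ = yⱼ` otherwise. Every summand is at most `D`, so splitting the exponent as
`N + 1 + s + b = ∑ⱼ γⱼ` bounds the integrand by a product of one-variable kernels
`|xⱼ - cⱼ| ^ σⱼ (y₁ + |xⱼ - cⱼ| ^ pⱼ) ^ (-γⱼ)`, where `σ₁ = s` carries the weight `x₁ ^ s` and
`σⱼ = 0` otherwise. Over all of `ℝ^{2N}` the integral of the product factorises. The `j`-th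
factor is integrable when `σⱼ > -1` and `pⱼ γⱼ > σⱼ + 1`, and the dilation `t ↦ y₁ ^ (1 / pⱼ) t`
shows that it equals `y₁ ^ ((σⱼ + 1) / pⱼ - γⱼ)` times a constant. The choice
`γⱼ = (σⱼ + 1) / pⱼ + b / 2N` makes each factor a multiple of `y₁ ^ (-b / 2N)`, and indeed
`∑ⱼ γⱼ = N + 1 + s + b`.
-/

open MeasureTheory

theorem Real.rpow_neg_add_sum_le_prod {ι : Type*} (t : Finset ι) {y : ℝ} (hy : 0 < y)
    {φ γ : ι → ℝ} (hφ : ∀ i ∈ t, 0 ≤ φ i) (hγ : ∀ i ∈ t, 0 ≤ γ i) :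
    (y + ∑ i ∈ t, φ i) ^ (-∑ i ∈ t, γ i) ≤ ∏ i ∈ t, (y + φ i) ^ (-γ i) := by
  have hsum := Finset.sum_nonneg hφ
  rw [← Finset.sum_neg_distrib, Real.rpow_sum_of_pos (by positivity)]
  refine Finset.prod_le_prod (fun i _ => by positivity) fun i hi => ?_
  exact Real.rpow_le_rpow_of_nonpos (by linarith [hφ i hi])
    (by linarith [Finset.single_le_sum hφ hi]) (by linarith [hγ i hi])

theorem EuclideanSpace.lintegral_ofReal_prod_eq {ι : Type*} [Fintype ι] {f : ι → ℝ → ℝ}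
    (hf : ∀ i, Integrable (f i)) (hf₀ : ∀ i, 0 ≤ f i) :
    ∫⁻ x : EuclideanSpace ℝ ι, ENNReal.ofReal (∏ i, f i (x i)) =
      ENNReal.ofReal (∏ i, ∫ t, f i t) := by
  rw [← (PiLp.volume_preserving_toLp ι).lintegral_comp_emb
    (MeasurableEquiv.toLp 2 (ι → ℝ)).measurableEmbedding, ← integral_fintype_prod_eq_prod,
    ofReal_integral_eq_lintegral_ofReal (Integrable.fintype_prod hf)
      (Filter.Eventually.of_forall fun x => Finset.prod_nonneg fun i _ => hf₀ i (x i))]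
  rfl

theorem abs_rpow_neg_le_two_rpow_mul_one_add_abs_rpow_neg {r : ℝ} (hr : 0 ≤ r) {t : ℝ}
    (ht : 1 ≤ |t|) :
    |t| ^ (-r) ≤ 2 ^ r * (1 + |t|) ^ (-r) := by
  have h : |t| ^ (-r) ≤ ((1 + |t|) / 2) ^ (-r) :=
    Real.rpow_le_rpow_of_nonpos (by positivity) (by linarith) (by linarith)
  rwa [Real.div_rpow (by positivity) zero_le_two, Real.rpow_neg zero_le_two, div_inv_eq_mul,
    mul_comm] at h

noncomputable def powKernel (s p q y t : ℝ) : ℝ := |t| ^ s * (y + |t| ^ p) ^ (-q)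

namespace powKernel

variable {s p q y : ℝ}

theorem nonneg (hy : 0 ≤ y) (t : ℝ) : 0 ≤ powKernel s p q y t := by
  unfold powKernel; positivity

@[fun_prop]
theorem measurable : Measurable (powKernel s p q y) := by
  unfold powKernel; fun_prop

theorem le_rpow_of_one_le_abs (hy : 0 ≤ y) (hq : 0 ≤ q) {t : ℝ} (ht : 1 ≤ |t|) :
    powKernel s p q y t ≤ |t| ^ (s - p * q) := by
  have ht0 : 0 < |t| := by linarith
  rw [powKernel, sub_eq_add_neg, Real.rpow_add ht0, neg_mul_eq_mul_neg, Real.rpow_mul ht0.le]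
  refine mul_le_mul_of_nonneg_left (Real.rpow_le_rpow_of_nonpos (by positivity) ?_ (by linarith))
    (by positivity)
  linarith

theorem le_mul_rpow (hy : 0 < y) (hq : 0 ≤ q) (t : ℝ) :
    powKernel s p q y t ≤ y ^ (-q) * |t| ^ s := by
  rw [powKernel, mul_comm]
  refine mul_le_mul_of_nonneg_right (Real.rpow_le_rpow_of_nonpos hy ?_ (by linarith))
    (by positivity)
  linarith [Real.rpow_nonneg (abs_nonneg t) p]

theorem integrable (hs : -1 < s) (hq₀ : 0 ≤ q) (hq : s + 1 < p * q) (hy : 0 < y) :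
    Integrable (powKernel s p q y) := by
  rw [← integrableOn_univ, ← Set.union_compl_self (Metric.ball (0 : ℝ) 1)]
  refine IntegrableOn.union ?_ ?_
  · refine integrableOn_ball_of_norm_le_rpow (C := y ^ (-q)) (α := -s) (by simp) (by simp; linarith)
      (Filter.Eventually.of_forall fun t => ?_) measurable.aestronglyMeasurable
    rw [Real.norm_of_nonneg (nonneg hy.le t), neg_neg, Real.norm_eq_abs]
    exact le_mul_rpow hy hq₀ t
  · have hdecay : Integrable fun t : ℝ => 2 ^ (p * q - s) * (1 + ‖t‖) ^ (-(p * q - s)) :=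
      (integrable_one_add_norm (by simp; linarith)).const_mul _
    refine hdecay.integrableOn.mono' measurable.aestronglyMeasurable.restrict
      (ae_restrict_of_forall_mem measurableSet_ball.compl fun t ht => ?_)
    have ht : 1 ≤ |t| := by simpa using ht
    rw [Real.norm_of_nonneg (nonneg hy.le t), Real.norm_eq_abs]
    calc powKernel s p q y t ≤ |t| ^ (-(p * q - s)) := by
          rw [neg_sub]; exact le_rpow_of_one_le_abs hy.le hq₀ ht
      _ ≤ _ := abs_rpow_neg_le_two_rpow_mul_one_add_abs_rpow_neg (by linarith) ht

theorem comp_mul_rpow_inv (hp : p ≠ 0) (hy : 0 < y) (t : ℝ) :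
    powKernel s p q y (y ^ p⁻¹ * t) = (y ^ p⁻¹) ^ s * y ^ (-q) * powKernel s p q 1 t := by
  have ha : 0 < y ^ p⁻¹ := by positivity
  rw [powKernel, powKernel, abs_mul, abs_of_pos ha, Real.mul_rpow ha.le (abs_nonneg t),
    Real.mul_rpow ha.le (abs_nonneg t), Real.rpow_inv_rpow hy.le hp,
    show y + y * |t| ^ p = y * (1 + |t| ^ p) by ring, Real.mul_rpow hy.le (by positivity)]
  ring

theorem integral_eq (hp : p ≠ 0) (hy : 0 < y) :
    ∫ t, powKernel s p q y t = y ^ ((s + 1) / p - q) * ∫ t, powKernel s p q 1 t := by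
  have ha : 0 < y ^ p⁻¹ := by positivity
  have hscale := Measure.integral_comp_mul_left (powKernel s p q y) (y ^ p⁻¹)
  simp_rw [comp_mul_rpow_inv hp hy, integral_const_mul, abs_inv, abs_of_pos ha,
    smul_eq_mul] at hscale
  rw [← mul_right_inj' (inv_pos.2 ha).ne', ← hscale, ← mul_assoc]
  congr 1
  rw [← Real.rpow_neg hy.le, ← Real.rpow_mul hy.le, ← Real.rpow_add hy, ← Real.rpow_add hy]
  congr 1
  field_simp
  ring

theorem integral_pos (hint : Integrable (powKernel s p q 1)) :
    0 < ∫ t, powKernel s p q 1 t := by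
  refine (integral_pos_iff_support_of_nonneg (nonneg zero_le_one) hint).2 ?_
  refine lt_of_lt_of_le ?_ (measure_mono (s := Set.Ioi 0) fun t (ht : 0 < t) => ?_)
  · simp
  · have : 0 < |t| := abs_pos.2 ht.ne'
    exact (show 0 < powKernel s p q 1 t by unfold powKernel; positivity).ne'

end powKernel

theorem Fin.sum_univ_eq_add_add_sum_filter {M : Type*} [AddCommMonoid M] {n : ℕ} (hn : 2 ≤ n)
    (f : Fin n → M) :
    ∑ j, f j = f ⟨0, by omega⟩ + f ⟨1, by omega⟩ +
      ∑ j ∈ Finset.univ.filter (fun j : Fin n => 2 ≤ (j : ℕ)), f j := by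
  rw [← Finset.sum_filter_not_add_sum_filter Finset.univ (fun j : Fin n => 2 ≤ (j : ℕ))]
  congr 1
  have hsmall : Finset.univ.filter (fun j : Fin n => ¬ 2 ≤ (j : ℕ)) =
      {⟨0, by omega⟩, ⟨1, by omega⟩} := by
    ext j
    simp only [Finset.mem_filter, Finset.mem_univ, true_and, Finset.mem_insert,
      Finset.mem_singleton, Fin.ext_iff]
    omega
  rw [hsmall, Finset.sum_pair (by simp [Fin.ext_iff])]

section Coordinates

/- `coordWeight`, `coordDegree`, `coordDecay` and `coordCentre` are the `σⱼ`, `pⱼ`, `γⱼ` and `cⱼ`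
of the proof idea; coordinates are numbered from `0`, so index `0` is the paper's `x₁`. -/

variable {n : ℕ}

def coordDegree (j : Fin n) : ℝ := if (j : ℕ) < 2 then 1 else 2

def coordWeight (s : ℝ) (j : Fin n) : ℝ := if (j : ℕ) = 0 then s else 0

def coordCentre (y : EuclideanSpace ℝ (Fin n)) (j : Fin n) : ℝ := if (j : ℕ) = 0 then 0 else y j

noncomputable def coordDecay (s b : ℝ) (j : Fin n) : ℝ :=
  (coordWeight s j + 1) / coordDegree j + b / n

theorem coordDegree_pos (j : Fin n) : 0 < coordDegree j := by
  unfold coordDegree; split_ifs <;> norm_num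

theorem neg_one_lt_coordWeight {s : ℝ} (hs : -1 < s) (j : Fin n) : -1 < coordWeight s j := by
  unfold coordWeight; split_ifs <;> linarith

theorem coordWeight_add_one_lt_mul_coordDecay (s : ℝ) {b : ℝ} (hb : 0 < b) (j : Fin n) :
    coordWeight s j + 1 < coordDegree j * coordDecay s b j := by
  have hp := coordDegree_pos j
  have hn : (0 : ℝ) < n := by exact_mod_cast j.pos
  rw [coordDecay, mul_add, mul_div_cancel₀ _ hp.ne']
  linarith [mul_pos hp (div_pos hb hn)]

theorem coordDecay_nonneg {s b : ℝ} (hs : -1 ≤ s) (hb : 0 ≤ b) (j : Fin n) :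
    0 ≤ coordDecay s b j := by
  have := coordDegree_pos j
  have : 0 ≤ coordWeight s j + 1 := by unfold coordWeight; split_ifs <;> linarith
  unfold coordDecay; positivity

theorem sum_coordDecay {N : ℕ} (hN : 0 < N) (s b : ℝ) :
    ∑ j : Fin (2 * N), coordDecay s b j = N + 1 + s + b := by
  set c : ℝ := 1 / 2 + b / (2 * N) with hc_def
  have hsplit := Fin.sum_univ_eq_add_add_sum_filter (M := ℝ) (by omega : 2 ≤ 2 * N)
  have hR : ∀ j ∈ Finset.univ.filter (fun j : Fin (2 * N) => 2 ≤ (j : ℕ)),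
      coordDecay s b j = c := by
    intro j hj
    have hj : 2 ≤ (j : ℕ) := (Finset.mem_filter.1 hj).2
    simp only [coordDecay, coordWeight, coordDegree, if_neg (by omega : ¬ (j : ℕ) = 0),
      if_neg (by omega : ¬ (j : ℕ) < 2)]
    push_cast
    ring
  have hconst := hsplit fun _ => c
  have hc : ∑ _j : Fin (2 * N), c = N + b := by
    rw [Finset.sum_const, Finset.card_univ, Fintype.card_fin, nsmul_eq_mul]
    have : (N : ℝ) ≠ 0 := by positivity
    push_cast
    rw [hc_def]
    field_simp
  rw [hsplit, Finset.sum_congr rfl hR]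
  simp only [coordDecay, coordWeight, coordDegree, if_pos, Nat.lt_succ_self]
  push_cast
  linarith

theorem add_sum_abs_sub_coordCentre_rpow (hn : 2 ≤ n) (x y : EuclideanSpace ℝ (Fin n))
    (hx : 0 ≤ x ⟨0, by omega⟩) :
    x ⟨0, by omega⟩ + y ⟨0, by omega⟩ + |x ⟨1, by omega⟩ - y ⟨1, by omega⟩|
        + ∑ j ∈ Finset.univ.filter (fun j : Fin n => 2 ≤ (j : ℕ)), (x j - y j) ^ 2
      = y ⟨0, by omega⟩ + ∑ j, |x j - coordCentre y j| ^ coordDegree j := by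
  have hR : ∀ j ∈ Finset.univ.filter (fun j : Fin n => 2 ≤ (j : ℕ)),
      |x j - coordCentre y j| ^ coordDegree j = (x j - y j) ^ 2 := by
    intro j hj
    have hj : 2 ≤ (j : ℕ) := (Finset.mem_filter.1 hj).2
    rw [coordCentre, coordDegree, if_neg (by omega), if_neg (by omega), Real.rpow_two, sq_abs]
  rw [Fin.sum_univ_eq_add_add_sum_filter hn, Finset.sum_congr rfl hR]
  simp only [coordCentre, coordDegree, ↓reduceIte, sub_zero, abs_of_nonneg hx, Order.lt_two_iff,
    zero_le, Real.rpow_one, one_ne_zero, Std.le_refl]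
  ring

theorem prod_abs_sub_coordCentre_rpow_coordWeight (hn : 1 ≤ n) (s : ℝ)
    (x y : EuclideanSpace ℝ (Fin n)) (hx : 0 ≤ x ⟨0, by omega⟩) :
    ∏ j, |x j - coordCentre y j| ^ coordWeight s j = x ⟨0, by omega⟩ ^ s := by
  rw [Finset.prod_eq_single ⟨0, by omega⟩ (fun j _ hj => ?_) (by simp)]
  · simp [coordCentre, coordWeight, abs_of_nonneg hx]
  · rw [coordWeight, if_neg (fun h => hj (Fin.ext h)), Real.rpow_zero]

theorem prod_integral_powKernel_sub (hn : n ≠ 0) (s b : ℝ) {y₀ : ℝ} (hy₀ : 0 < y₀)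
    (c : Fin n → ℝ) :
    ∏ j, ∫ t, powKernel (coordWeight s j) (coordDegree j) (coordDecay s b j) y₀ (t - c j) =
      (∏ j : Fin n, ∫ t, powKernel (coordWeight s j) (coordDegree j) (coordDecay s b j) 1 t) /
        y₀ ^ b := by
  have hexp : ∀ j : Fin n, (coordWeight s j + 1) / coordDegree j - coordDecay s b j = -(b / n) :=
    fun j => by rw [coordDecay]; ring
  simp_rw [integral_sub_right_eq_self (powKernel _ _ _ y₀),
    powKernel.integral_eq (coordDegree_pos _).ne' hy₀, hexp, Finset.prod_mul_distrib,
    Finset.prod_const, Finset.card_univ, Fintype.card_fin, ← Real.rpow_mul_natCast hy₀.le]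
  rw [neg_mul, div_mul_cancel₀ _ (by exact_mod_cast hn), Real.rpow_neg hy₀.le, inv_mul_eq_div]

theorem div_rpow_le_prod_powKernel {N : ℕ} (hN : 0 < N) {s b : ℝ} (hs : -1 ≤ s) (hb : 0 ≤ b)
    (x y : EuclideanSpace ℝ (Fin (2 * N))) (hy : 0 < y ⟨0, by omega⟩) (hx : 0 ≤ x ⟨0, by omega⟩) :
    x ⟨0, by omega⟩ ^ s / (x ⟨0, by omega⟩ + y ⟨0, by omega⟩ + |x ⟨1, by omega⟩ - y ⟨1, by omega⟩|
        + ∑ j ∈ Finset.univ.filter (fun j : Fin (2 * N) => 2 ≤ (j : ℕ)), (x j - y j) ^ 2)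
        ^ ((N : ℝ) + 1 + s + b) ≤
      ∏ j, powKernel (coordWeight s j) (coordDegree j) (coordDecay s b j) (y ⟨0, by omega⟩)
        (x j - coordCentre y j) := by
  rw [add_sum_abs_sub_coordCentre_rpow (by omega) x y hx, ← sum_coordDecay hN s b,
    ← prod_abs_sub_coordCentre_rpow_coordWeight (by omega) s x y hx, div_eq_mul_inv,
    ← Real.rpow_neg (by positivity)]
  simp only [powKernel]
  rw [Finset.prod_mul_distrib]
  exact mul_le_mul_of_nonneg_left
    (Real.rpow_neg_add_sum_le_prod _ hy (fun j _ => by positivity)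
      fun j _ => coordDecay_nonneg hs hb j)
    (Finset.prod_nonneg fun j _ => by positivity)

end Coordinates

/-- The elementary Koranyi-ball kernel estimate: for `N ≥ 1`, `s > -1`, `b > 0`, there is
`C` such that for all `y ∈ ℝ^{2N}` with `y₁ > 0`,
`∫_{|x|<1, x₁>0} x₁^s / (x₁ + y₁ + |x₂-y₂| + ∑_{j≥3}(x_j-y_j)²)^{N+1+s+b} dx ≤ C / y₁^b`. -/
theorem stmt15 (N : ℕ) (hN : 1 ≤ N) (s b : ℝ) (hs : s > -1) (hb : 0 < b) :
    ∃ C : ℝ, 0 < C ∧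
      ∀ y : EuclideanSpace ℝ (Fin (2 * N)), 0 < y ⟨0, by omega⟩ →
      (∫⁻ x in {x : EuclideanSpace ℝ (Fin (2 * N)) | ‖x‖ < 1 ∧ 0 < x ⟨0, by omega⟩},
          ENNReal.ofReal ((x ⟨0, by omega⟩) ^ s /
            (x ⟨0, by omega⟩ + y ⟨0, by omega⟩ + |x ⟨1, by omega⟩ - y ⟨1, by omega⟩|
              + ∑ j ∈ Finset.univ.filter (fun j : Fin (2 * N) => 2 ≤ (j : ℕ)),
                  (x j - y j) ^ 2) ^ ((N : ℝ) + 1 + s + b)))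
        ≤ ENNReal.ofReal (C / (y ⟨0, by omega⟩) ^ b) := by
  have hintegrable : ∀ (j : Fin (2 * N)) (y₀ : ℝ), 0 < y₀ →
      Integrable (powKernel (coordWeight s j) (coordDegree j) (coordDecay s b j) y₀) :=
    fun j _ hy₀ => powKernel.integrable (neg_one_lt_coordWeight hs j)
      (coordDecay_nonneg hs.le hb.le j) (coordWeight_add_one_lt_mul_coordDecay s hb j) hy₀
  refine ⟨∏ j, ∫ t, powKernel (coordWeight s j) (coordDegree j) (coordDecay s b j) 1 t,
    Finset.prod_pos fun j _ => powKernel.integral_pos (hintegrable j 1 one_pos), fun y hy => ?_⟩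
  calc _ ≤ ∫⁻ x : EuclideanSpace ℝ (Fin (2 * N)), ENNReal.ofReal (∏ j, powKernel (coordWeight s j)
          (coordDegree j) (coordDecay s b j) (y ⟨0, by omega⟩) (x j - coordCentre y j)) :=
        (setLIntegral_mono (by fun_prop) fun x hx => ENNReal.ofReal_le_ofReal
          (div_rpow_le_prod_powKernel hN hs.le hb.le x y hy hx.2.le)).trans
          (setLIntegral_le_lintegral _ _)
    _ = ENNReal.ofReal (∏ j, ∫ t, powKernel (coordWeight s j) (coordDegree j)
          (coordDecay s b j) (y ⟨0, by omega⟩) (t - coordCentre y j)) :=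
        EuclideanSpace.lintegral_ofReal_prod_eq (fun j => (hintegrable j _ hy).comp_sub_right _)
          fun j t => powKernel.nonneg hy.le _
    _ = _ := by rw [prod_integral_powKernel_sub (by omega) s b hy]
end
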